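/- For every pair partition p ∈ J(n,n), the left-height satisfies ht(p) ≤ n - 2. Consequently J_{≤r}(n,n) = J_{≤n-2}(n,n) for all r with n - 2 ≤ r. -/

import Mathlib

open Classical

/-!  A combinatorial axiomatisation of pictures and of the left-height of a
set partition, as sanctioned by the paper.  A picture is presented as a *plan*:
a vertical stack of elementary rows, each row consisting of identity strands
together with a single elementary generator of the partition category
(a crossing, cup, cap, merge, split, unit or counit) placed after `w` strands.
The only crossing points are those of `swap` rows, and a crossing placed after
`w` strands has left-height `w` (a path to the left edge at that level crosses
exactly the `w` strands to its left).  The left-height of a partition is the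
minimum height over all plans realising it. -/

/-- An elementary row with `w` strands to the left of the generator and `v`
strands to its right. -/
inductive Row : ℕ → ℕ → Type
  | swap  (w v : ℕ) : Row (w + 2 + v) (w + 2 + v)
  | cap   (w v : ℕ) : Row (w + 2 + v) (w + v)
  | cup   (w v : ℕ) : Row (w + v) (w + 2 + v)
  | mu    (w v : ℕ) : Row (w + 2 + v) (w + 1 + v)
  | delta (w v : ℕ) : Row (w + 1 + v) (w + 2 + v)
  | eta   (w v : ℕ) : Row (w + v) (w + 1 + v)
  | eps   (w v : ℕ) : Row (w + 1 + v) (w + v)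

/-- The connections realised by an elementary row, as a relation between its
top boundary (`inl`) and bottom boundary (`inr`) points. -/
def rowRel : {a b : ℕ} → Row a b → (Fin a ⊕ Fin b) → (Fin a ⊕ Fin b) → Prop
  | _, _, .swap w _ => fun x y =>
      match x, y with
      | .inl i, .inr j => (i.val = w ∧ j.val = w + 1) ∨ (i.val = w + 1 ∧ j.val = w) ∨
          (i.val ≠ w ∧ i.val ≠ w + 1 ∧ j.val = i.val)
      | _, _ => False
  | _, _, .cap w _ => fun x y =>
      match x, y with
      | .inl i, .inl j => i.val = w ∧ j.val = w + 1
      | .inl i, .inr j => (i.val < w ∧ j.val = i.val) ∨ (w + 2 ≤ i.val ∧ j.val + 2 = i.val)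
      | _, _ => False
  | _, _, .cup w _ => fun x y =>
      match x, y with
      | .inr i, .inr j => i.val = w ∧ j.val = w + 1
      | .inl i, .inr j => (i.val < w ∧ j.val = i.val) ∨ (w ≤ i.val ∧ j.val = i.val + 2)
      | _, _ => False
  | _, _, .mu w _ => fun x y =>
      match x, y with
      | .inl i, .inr j => (i.val < w ∧ j.val = i.val) ∨
          ((i.val = w ∨ i.val = w + 1) ∧ j.val = w) ∨
          (w + 2 ≤ i.val ∧ j.val + 1 = i.val)
      | _, _ => False
  | _, _, .delta w _ => fun x y =>
      match x, y with
      | .inl i, .inr j => (i.val < w ∧ j.val = i.val) ∨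
          (i.val = w ∧ (j.val = w ∨ j.val = w + 1)) ∨
          (w + 1 ≤ i.val ∧ j.val = i.val + 1)
      | _, _ => False
  | _, _, .eta w _ => fun x y =>
      match x, y with
      | .inl i, .inr j => (i.val < w ∧ j.val = i.val) ∨ (w ≤ i.val ∧ j.val = i.val + 1)
      | _, _ => False
  | _, _, .eps w _ => fun x y =>
      match x, y with
      | .inl i, .inr j => (i.val < w ∧ j.val = i.val) ∨ (w + 1 ≤ i.val ∧ j.val + 1 = i.val)
      | _, _ => False

/-- The left-height contributed by a row: a crossing placed after `w` strands
has left-height `w`; the other generators have no crossing points. -/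
def rowHt : {a b : ℕ} → Row a b → ℤ
  | _, _, .swap w _ => (w : ℤ)
  | _, _, _ => -1

/-- The identity connection relation (vertical strands). -/
def idConn (a : ℕ) : (Fin a ⊕ Fin a) → (Fin a ⊕ Fin a) → Prop := fun x y =>
  match x, y with
  | .inl i, .inr j => i.val = j.val
  | _, _ => False

section Stack

variable {a b c : ℕ}

/-- Inclusions into the three-layer set used for stacking. -/
def ιtop : Fin a ⊕ Fin b → Fin a ⊕ (Fin b ⊕ Fin c)
  | .inl i => .inl i
  | .inr j => .inr (.inl j)

def ιbot : Fin b ⊕ Fin c → Fin a ⊕ (Fin b ⊕ Fin c) := Sum.inr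

def ιout : Fin a ⊕ Fin c → Fin a ⊕ (Fin b ⊕ Fin c)
  | .inl i => .inl i
  | .inr j => .inr (.inr j)

/-- Composition (stacking) of two partitions, given as relations on their
boundaries: the transitive closure of the union, restricted to the outer
boundary. -/
def stackRel (P : (Fin a ⊕ Fin b) → (Fin a ⊕ Fin b) → Prop)
    (Q : (Fin b ⊕ Fin c) → (Fin b ⊕ Fin c) → Prop) :
    (Fin a ⊕ Fin c) → (Fin a ⊕ Fin c) → Prop := fun x y =>
  Relation.EqvGen
    (fun s t => (∃ u v, P u v ∧ s = ιtop u ∧ t = ιtop v) ∨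
      (∃ u v, Q u v ∧ s = ιbot (a := a) u ∧ t = ιbot (a := a) v))
    (ιout x) (ιout y)

end Stack

/-- A plan (combinatorial picture): a vertical stack of elementary rows. -/
inductive Plan : ℕ → ℕ → Type
  | nil (a : ℕ) : Plan a a
  | cons {a b c : ℕ} : Row a b → Plan b c → Plan a c

/-- The partition (boundary equivalence relation) realised by a plan. -/
def planRel : {a b : ℕ} → Plan a b → (Fin a ⊕ Fin b) → (Fin a ⊕ Fin b) → Prop
  | _, _, .nil a => Relation.EqvGen (idConn a)
  | _, _, .cons r rest => stackRel (Relation.EqvGen (rowRel r)) (planRel rest)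

/-- The left-height of a plan: the maximal left-height of its crossing points,
or `-1` if it has none. -/
def planHt : {a b : ℕ} → Plan a b → ℤ
  | _, _, .nil _ => -1
  | _, _, .cons r rest => max (rowHt r) (planHt rest)

/-- `Realizes pl P`: the plan `pl` is a picture of the partition given by the
boundary relation `P`. -/
def Realizes {a b : ℕ} (pl : Plan a b) (P : (Fin a ⊕ Fin b) → (Fin a ⊕ Fin b) → Prop) : Prop :=
  ∀ x y, planRel pl x y ↔ P x y

/-- The left-height of a partition: the minimum of the heights of the pictures
representing it. -/
noncomputable def ht {a b : ℕ} (P : (Fin a ⊕ Fin b) → (Fin a ⊕ Fin b) → Prop) : ℤ :=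
  sInf {h : ℤ | ∃ pl : Plan a b, Realizes pl P ∧ planHt pl = h}

/-!
A fixed-point-free involution of `Fin m ⊕ Fin n` with `m ≤ n` is drawn row by row from the top,
never with more than `n` strands, so that every crossing has left-height at most `n - 2`. Two top
points paired with each other are brought to the right end of the top boundary by crossings and
capped off. Once every top point is paired with a bottom point, two bottom points paired with each
other are joined by a cup at the right end; there is room for it, as the top points are paired
with only `m` of the other bottom points. When no such pairs are left, `m = n` and the pairing is a
permutation, a product of adjacent crossings.
-/

open Function Relation

section PairRel

variable {α β : Type*}

/-- Encoding the block `{x, f x}` as an unordered pair makes this an equivalence relation for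
every `f`. -/
def pairRel (f : α → α) (x y : α) : Prop := s(x, f x) = s(y, f y)

theorem pairRel_equivalence (f : α → α) : Equivalence (pairRel f) :=
  Equivalence.comap eq_equivalence fun x => s(x, f x)

theorem pairRel_iff {f : α → α} (hf : Involutive f) {x y : α} :
    pairRel f x y ↔ y = x ∨ y = f x := by
  unfold pairRel
  rw [Sym2.eq_iff]
  constructor
  · rintro (⟨rfl, -⟩ | ⟨rfl, -⟩)
    exacts [Or.inl rfl, Or.inr (hf y).symm]
  · rintro (rfl | rfl)
    exacts [Or.inl ⟨rfl, rfl⟩, Or.inr ⟨(hf x).symm, rfl⟩]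

theorem pairRel_apply {f : α → α} (hf : Involutive f) (x : α) : pairRel f x (f x) :=
  (pairRel_iff hf).2 (Or.inr rfl)

theorem eqvGen_eq_apply_iff_pairRel {f : α → α} (hf : Involutive f) {x y : α} :
    EqvGen (fun x y => y = f x) x y ↔ pairRel f x y := by
  refine ⟨fun h => ?_, fun h => ?_⟩
  · exact (pairRel_equivalence f).eqvGen_iff.1 <|
      EqvGen.mono (fun x y (hxy : y = f x) => hxy ▸ pairRel_apply hf x) _ _ h
  · rcases (pairRel_iff hf).1 h with rfl | rfl
    exacts [EqvGen.refl _, EqvGen.rel _ _ rfl]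

theorem Function.Semiconj.pairRel_iff {e : α → β} {g : α → α} {f : β → β} (h : Semiconj e g f)
    (he : Injective e) {x y : α} : pairRel f (e x) (e y) ↔ pairRel g x y := by
  unfold pairRel
  rw [← h x, ← h y]
  exact (Sym2.map.injective he).eq_iff (a := s(x, g x)) (b := s(y, g y))

theorem Function.Semiconj.involutive_of_injective {e : α → β} {g : α → α} {f : β → β}
    (h : Semiconj e g f) (he : Injective e) (hf : Involutive f) : Involutive g :=
  fun x => he <| by rw [h, h, hf]

theorem Function.Semiconj.apply_ne_self {e : α → β} {g : α → α} {f : β → β} (h : Semiconj e g f)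
    (hf : ∀ y, f y ≠ y) (x : α) : g x ≠ x :=
  fun hx => hf (e x) (by rw [← h, hx])

end PairRel

theorem Equiv.Perm.exists_apply_eq_and_apply_eq {α : Type*} [DecidableEq α] {i j a b : α}
    (hij : i ≠ j) (hab : a ≠ b) : ∃ π : Equiv.Perm α, π i = a ∧ π j = b := by
  have hj : Equiv.swap i a j ≠ a := fun h =>
    hij ((Equiv.swap i a).injective (h.trans (Equiv.swap_apply_left i a).symm)).symm
  refine ⟨Equiv.swap (Equiv.swap i a j) b * Equiv.swap i a, ?_, ?_⟩
  · simp [Equiv.swap_apply_of_ne_of_ne hj.symm hab]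
  · simp

theorem add_two_le_of_injective {m n : ℕ} {π : Fin m → Fin n} (hπ : Injective π) {k k' : Fin n}
    (hkk' : k ≠ k') (hk : ∀ i, π i ≠ k) (hk' : ∀ i, π i ≠ k') : m + 2 ≤ n := by
  have hsub : Finset.univ.map ⟨π, hπ⟩ ⊆ Finset.univ \ {k, k'} := by
    intro t ht
    obtain ⟨i, -, rfl⟩ := Finset.mem_map.1 ht
    simp [hk i, hk' i]
  have := Finset.card_le_card hsub
  simp [Finset.card_sdiff, Finset.card_pair hkk'] at this
  omega

section Stack

variable {a b c : ℕ} {P : Fin a ⊕ Fin b → Fin a ⊕ Fin b → Prop}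
  {Q : Fin b ⊕ Fin c → Fin b ⊕ Fin c → Prop}

def StackEdge (P : Fin a ⊕ Fin b → Fin a ⊕ Fin b → Prop)
    (Q : Fin b ⊕ Fin c → Fin b ⊕ Fin c → Prop) :
    Fin a ⊕ (Fin b ⊕ Fin c) → Fin a ⊕ (Fin b ⊕ Fin c) → Prop := fun s t =>
  (∃ u v, P u v ∧ s = ιtop u ∧ t = ιtop v) ∨
    (∃ u v, Q u v ∧ s = ιbot (a := a) u ∧ t = ιbot (a := a) v)

theorem eqvGen_stackEdge_top {u v : Fin a ⊕ Fin b} (h : P u v) :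
    EqvGen (StackEdge P Q) (ιtop u) (ιtop v) :=
  EqvGen.rel _ _ (Or.inl ⟨u, v, h, rfl, rfl⟩)

theorem eqvGen_stackEdge_bot {u v : Fin b ⊕ Fin c} (h : Q u v) :
    EqvGen (StackEdge P Q) (ιbot (a := a) u) (ιbot v) :=
  EqvGen.rel _ _ (Or.inr ⟨u, v, h, rfl, rfl⟩)

theorem stackRel.map {R : Fin a ⊕ Fin b → Fin a ⊕ Fin b → Prop} {X : Type*} {T : X → X → Prop}
    (hT : Equivalence T) (κ : Fin a ⊕ (Fin b ⊕ Fin c) → X)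
    (hR : ∀ u v, R u v → T (κ (ιtop u)) (κ (ιtop v)))
    (hQ : ∀ u v, Q u v → T (κ (ιbot u)) (κ (ιbot v))) {x y : Fin a ⊕ Fin c}
    (h : stackRel (EqvGen R) Q x y) : T (κ (ιout x)) (κ (ιout y)) := by
  refine (hT.comap κ).eqvGen_iff.1 (EqvGen.mono ?_ _ _ h)
  rintro _ _ (⟨u, v, huv, rfl, rfl⟩ | ⟨u, v, huv, rfl, rfl⟩)
  · exact (hT.comap (κ ∘ ιtop)).eqvGen_iff.1 (EqvGen.mono hR _ _ huv)
  · exact hQ u v huv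

/-- `tr` sends every point of the three boundaries to an outer boundary point of the same block. -/
theorem stackRel_iff_pairRel {R : Fin a ⊕ Fin b → Fin a ⊕ Fin b → Prop}
    {g : Fin b ⊕ Fin c → Fin b ⊕ Fin c} {f : Fin a ⊕ Fin c → Fin a ⊕ Fin c}
    (hg : Involutive g) (hf : Involutive f) (tr : Fin a ⊕ (Fin b ⊕ Fin c) → Fin a ⊕ Fin c)
    (htr : ∀ x, tr (ιout x) = x) (hR : ∀ u v, R u v → pairRel f (tr (ιtop u)) (tr (ιtop v)))
    (hgf : ∀ u, pairRel f (tr (ιbot u)) (tr (ιbot (g u))))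
    (hconn : ∀ x, stackRel (EqvGen R) (pairRel g) x (f x)) (x y : Fin a ⊕ Fin c) :
    stackRel (EqvGen R) (pairRel g) x y ↔ pairRel f x y := by
  refine ⟨fun h => ?_, fun h => ?_⟩
  · have := stackRel.map (pairRel_equivalence f) tr hR (fun u v huv => ?_) h
    · rwa [htr, htr] at this
    · rcases (pairRel_iff hg).1 huv with rfl | rfl
      exacts [(pairRel_equivalence f).refl _, hgf u]
  · rcases (pairRel_iff hf).1 h with rfl | rfl
    exacts [EqvGen.refl _, hconn x]

end Stack

section Plans

variable {a b c : ℕ} {P S : Fin a ⊕ Fin b → Fin a ⊕ Fin b → Prop}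

theorem planRel_equivalence (pl : Plan a b) : Equivalence (planRel pl) := by
  cases pl
  exacts [EqvGen.is_equivalence _, (EqvGen.is_equivalence _).comap ιout]

theorem Realizes.planRel_eq {pl : Plan a b} (h : Realizes pl P) : planRel pl = P :=
  funext₂ fun x y => propext (h x y)

theorem Realizes.equivalence {pl : Plan a b} (h : Realizes pl P) : Equivalence P :=
  h.planRel_eq ▸ planRel_equivalence pl

theorem Realizes.congr {pl : Plan a b} (h : Realizes pl P) (hPS : ∀ x y, P x y ↔ S x y) :
    Realizes pl S :=
  fun x y => (h x y).trans (hPS x y)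

theorem Realizes.cons {r : Row a b} {pl : Plan b c} {Q : Fin b ⊕ Fin c → Fin b ⊕ Fin c → Prop}
    {S : Fin a ⊕ Fin c → Fin a ⊕ Fin c → Prop} (h : Realizes pl Q)
    (hS : ∀ x y, stackRel (EqvGen (rowRel r)) Q x y ↔ S x y) : Realizes (.cons r pl) S := by
  intro x y
  change stackRel _ (planRel pl) x y ↔ _
  rw [h.planRel_eq]
  exact hS x y

theorem planHt_cons_le {r : Row a b} {pl : Plan b c} {H : ℤ} (hr : rowHt r ≤ H)
    (hpl : planHt pl ≤ H) : planHt (.cons r pl) ≤ H :=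
  max_le hr hpl

theorem neg_one_le_planHt (pl : Plan a b) : -1 ≤ planHt pl := by
  induction pl with
  | nil => exact le_rfl
  | cons r _ ih => exact ih.trans (le_max_right _ _)

theorem ht_le_of_realizes {pl : Plan a b} (h : Realizes pl P) : ht P ≤ planHt pl :=
  csInf_le ⟨-1, by rintro _ ⟨pl', -, rfl⟩; exact neg_one_le_planHt pl'⟩ ⟨pl, h, rfl⟩

theorem realizes_nil_swap (n : ℕ) : Realizes (Plan.nil n) (pairRel Sum.swap) := by
  intro x y
  refine ⟨fun h => (pairRel_equivalence _).eqvGen_iff.1 (EqvGen.mono ?_ _ _ h), fun h => ?_⟩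
  · rintro (i | i) (j | j) hij <;> simp only [idConn] at hij
    exact (pairRel_iff Sum.swap_swap).2 (Or.inr (by rw [Fin.ext hij]; rfl))
  · rcases (pairRel_iff Sum.swap_swap).1 h with rfl | rfl
    · exact EqvGen.refl _
    · rcases x with i | i
      exacts [EqvGen.rel _ _ rfl, (EqvGen.rel (Sum.inl i) (Sum.inr i) rfl).symm]

end Plans

section Swap

variable {n c : ℕ}

def adjSwapRow (i : Fin n) : Row (n + 1) (n + 1) :=
  (show i.val + 2 + (n - 1 - i.val) = n + 1 by omega) ▸ Row.swap i (n - 1 - i)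

theorem rowRel_cast_swap {w v m : ℕ} (h : w + 2 + v = m) {x y : Fin m ⊕ Fin m} :
    rowRel (h ▸ Row.swap w v) x y ↔
      ∃ j, x = .inl j ∧ y = .inr (Equiv.swap ⟨w, by omega⟩ ⟨w + 1, by omega⟩ j) := by
  subst h
  rcases x with i | i <;> rcases y with j | j <;>
    simp only [rowRel, reduceCtorEq, false_and, and_false, exists_false, Sum.inl.injEq,
      Sum.inr.injEq, exists_eq_left', Equiv.swap_apply_def]
  split_ifs <;> simp only [Fin.ext_iff] at * <;> omega

theorem rowRel_adjSwapRow (i : Fin n) {x y : Fin (n + 1) ⊕ Fin (n + 1)} :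
    rowRel (adjSwapRow i) x y ↔ ∃ j, x = .inl j ∧ y = .inr (Equiv.swap i.castSucc i.succ j) :=
  rowRel_cast_swap _

theorem rowHt_adjSwapRow (i : Fin n) : rowHt (adjSwapRow i) = i := by
  unfold adjSwapRow
  generalize_proofs h
  revert h
  generalize n + 1 = m
  rintro rfl
  rfl

theorem Realizes.cons_adjSwapRow {Q : Fin (n + 1) ⊕ Fin c → Fin (n + 1) ⊕ Fin c → Prop}
    {pl : Plan (n + 1) c} (h : Realizes pl Q) (i : Fin n) :
    Realizes (.cons (adjSwapRow i) pl) (Q on Sum.map (Equiv.swap i.castSucc i.succ) id) := by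
  set σ := Equiv.swap i.castSucc i.succ
  have hQ := h.equivalence
  have hout : ∀ x, EqvGen (StackEdge (EqvGen (rowRel (adjSwapRow i))) Q)
      (ιout x) (ιbot (Sum.map σ id x)) := by
    rintro (j | k)
    · exact eqvGen_stackEdge_top (EqvGen.rel _ _ ((rowRel_adjSwapRow i).2 ⟨j, rfl, rfl⟩))
    · exact EqvGen.refl _
  refine h.cons fun x y => ⟨fun hxy => ?_, fun hxy => ?_⟩
  · have := hxy.map hQ (Sum.elim (fun j => .inl (σ j)) id) (fun u v huv => ?_)
      fun u v huv => huv
    · rcases x with _ | _ <;> rcases y with _ | _ <;> exact this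
    · obtain ⟨j, rfl, rfl⟩ := (rowRel_adjSwapRow i).1 huv
      exact hQ.refl _
  · exact ((hout x).trans _ _ _ (eqvGen_stackEdge_bot hxy)).trans _ _ _ (hout y).symm

/-- Every permutation of the top boundary is a product of adjacent crossings, each of left-height
at most `a - 2`. -/
theorem exists_realizes_onFun_sumMap {a : ℕ} {Q : Fin a ⊕ Fin c → Fin a ⊕ Fin c → Prop}
    {pl : Plan a c} (hpl : Realizes pl Q) {H : ℤ} (hH : planHt pl ≤ H) (ha : (a : ℤ) ≤ H + 2)
    (π : Equiv.Perm (Fin a)) :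
    ∃ pl' : Plan a c, Realizes pl' (Q on Sum.map π id) ∧ planHt pl' ≤ H := by
  cases a with
  | zero =>
    refine ⟨pl, hpl.congr ?_, hH⟩
    rintro (⟨_, ⟨⟩⟩ | x) (⟨_, ⟨⟩⟩ | y)
    exact Iff.rfl
  | succ n =>
    induction π using Submonoid.induction_of_closure_eq_top_right
      (Equiv.Perm.mclosure_swap_castSucc_succ n) with
    | one => exact ⟨pl, hpl.congr fun x y => by simp [onFun], hH⟩
    | mul_right π _ hσ ih =>
      obtain ⟨i, rfl⟩ := hσ
      obtain ⟨pl', hpl', hH'⟩ := ih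
      refine ⟨.cons (adjSwapRow i) pl', (hpl'.cons_adjSwapRow i).congr fun x y => ?_,
        planHt_cons_le (by rw [rowHt_adjSwapRow]; omega) hH'⟩
      simp only [onFun, Sum.map_map, Equiv.Perm.coe_mul, CompTriple.comp_eq]

end Swap

section CapCup

variable {w c : ℕ}

def castTop : Fin w ⊕ Fin c → Fin (w + 2) ⊕ Fin c := Sum.map (fun j => j.castSucc.castSucc) id

@[simp]
theorem castTop_inr (t : Fin c) : (castTop (.inr t) : Fin (w + 2) ⊕ Fin c) = .inr t := rfl

theorem castTop_injective : Injective (castTop : Fin w ⊕ Fin c → Fin (w + 2) ⊕ Fin c) :=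
  Sum.map_injective.2 ⟨(Fin.castSucc_injective _).comp (Fin.castSucc_injective _), injective_id⟩

theorem castTop_ne_castSucc_last (u : Fin w ⊕ Fin c) :
    castTop u ≠ .inl (Fin.last w).castSucc := by
  rcases u with j | k <;> simp [castTop, Fin.ext_iff]
  omega

theorem castTop_ne_last (u : Fin w ⊕ Fin c) : castTop u ≠ .inl (Fin.last (w + 1)) := by
  rcases u with j | k <;> simp [castTop, Fin.ext_iff]
  omega

theorem castTop_cases (x : Fin (w + 2) ⊕ Fin c) :
    x = .inl (Fin.last w).castSucc ∨ x = .inl (Fin.last (w + 1)) ∨ ∃ u, x = castTop u := by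
  rcases x with i | k
  · induction i using Fin.lastCases with
    | last => exact Or.inr (Or.inl rfl)
    | cast i =>
      induction i using Fin.lastCases with
      | last => exact Or.inl rfl
      | cast j => exact Or.inr (Or.inr ⟨.inl j, rfl⟩)
  · exact Or.inr (Or.inr ⟨.inr k, rfl⟩)

theorem rowRel_cap {u v : Fin (w + 2) ⊕ Fin w} :
    rowRel (Row.cap w 0) u v ↔
      (u = .inl (Fin.last w).castSucc ∧ v = .inl (Fin.last (w + 1))) ∨
        ∃ j : Fin w, u = .inl j.castSucc.castSucc ∧ v = .inr j := by
  rcases u with i | i <;> rcases v with j | j <;> simp [rowRel, Fin.ext_iff]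
  constructor
  · rintro (⟨-, hj⟩ | ⟨h, -⟩)
    exacts [⟨j, hj.symm, rfl⟩, by omega]
  · rintro ⟨j', hi, hj⟩
    omega

theorem rowRel_cup {u v : Fin w ⊕ Fin (w + 2)} :
    rowRel (Row.cup w 0) u v ↔
      (u = .inr (Fin.last w).castSucc ∧ v = .inr (Fin.last (w + 1))) ∨
        ∃ j : Fin w, u = .inl j ∧ v = .inr j.castSucc.castSucc := by
  rcases u with i | i <;> rcases v with j | j <;> simp [rowRel, Fin.ext_iff]
  constructor
  · rintro (hj | ⟨h, -⟩)
    exacts [⟨i, rfl, hj⟩, by omega]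
  · rintro ⟨j', hi, hj⟩
    omega

theorem exists_semiconj_castTop {f : Fin (w + 2) ⊕ Fin c → Fin (w + 2) ⊕ Fin c}
    (hf : Involutive f) (hcap : f (.inl (Fin.last w).castSucc) = .inl (Fin.last (w + 1))) :
    ∃ g, Semiconj castTop g f := by
  have hcap' : f (.inl (Fin.last (w + 1))) = .inl (Fin.last w).castSucc := by rw [← hcap, hf]
  have : ∀ u, ∃ v, castTop v = f (castTop u) := by
    intro u
    rcases castTop_cases (f (castTop u)) with h | h | ⟨v, h⟩
    · exact absurd (by rw [← hf (castTop u), h, hcap]) (castTop_ne_last u)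
    · exact absurd (by rw [← hf (castTop u), h, hcap']) (castTop_ne_castSucc_last u)
    · exact ⟨v, h.symm⟩
  choose g hg using this
  exact ⟨g, hg⟩

theorem Realizes.cons_cap {f : Fin (w + 2) ⊕ Fin c → Fin (w + 2) ⊕ Fin c}
    {g : Fin w ⊕ Fin c → Fin w ⊕ Fin c} {pl : Plan w c} (h : Realizes pl (pairRel g))
    (hf : Involutive f) (hcap : f (.inl (Fin.last w).castSucc) = .inl (Fin.last (w + 1)))
    (hgf : Semiconj castTop g f) : Realizes (.cons (Row.cap w 0) pl) (pairRel f) := by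
  have hg := hgf.involutive_of_injective castTop_injective hf
  have hcap' : f (.inl (Fin.last (w + 1))) = .inl (Fin.last w).castSucc := by rw [← hcap, hf]
  have hmid : ∀ u, EqvGen (StackEdge (EqvGen (rowRel (Row.cap w 0))) (pairRel g))
      (ιbot u) (ιout (castTop u)) := by
    rintro (j | k)
    · exact (eqvGen_stackEdge_top (EqvGen.rel _ _ (rowRel_cap.2 (.inr ⟨j, rfl, rfl⟩)))).symm
    · exact EqvGen.refl _
  have hcapEdge : EqvGen (StackEdge (EqvGen (rowRel (Row.cap w 0))) (pairRel g))
      (ιout (.inl (Fin.last w).castSucc)) (ιout (.inl (Fin.last (w + 1)))) :=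
    eqvGen_stackEdge_top (EqvGen.rel _ _ (rowRel_cap.2 (.inl ⟨rfl, rfl⟩)))
  refine h.cons (stackRel_iff_pairRel hg hf (Sum.elim .inl castTop) (by rintro (_ | _) <;> rfl)
    (fun u v huv => ?_) (fun u => ?_) (fun x => ?_))
  · rcases rowRel_cap.1 huv with ⟨rfl, rfl⟩ | ⟨j, rfl, rfl⟩
    · change pairRel f (.inl _) (.inl _)
      rw [← hcap]
      exact pairRel_apply hf _
    · exact (pairRel_equivalence f).refl _
  · change pairRel f (castTop u) (castTop (g u))
    exact hgf u ▸ pairRel_apply hf _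
  · rcases castTop_cases x with rfl | rfl | ⟨u, rfl⟩
    · exact hcap ▸ hcapEdge
    · exact hcap' ▸ hcapEdge.symm
    · rw [← hgf u]
      exact ((hmid u).symm.trans _ _ _ (eqvGen_stackEdge_bot (pairRel_apply hg u))).trans
        _ _ _ (hmid (g u))

/-- The pairing `f` with its pair `{k, k'}` of bottom points replaced by the pairs `{k, w}` and
`{k', w + 1}`, where `w` and `w + 1` are two new top points. -/
def cupExtend (k k' : Fin c) (f : Fin w ⊕ Fin c → Fin w ⊕ Fin c) :
    Fin (w + 2) ⊕ Fin c → Fin (w + 2) ⊕ Fin c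
  | .inl i => Fin.lastCases (.inr k') (Fin.lastCases (.inr k) fun j => castTop (f (.inl j))) i
  | .inr t =>
    if t = k then .inl (Fin.last w).castSucc
    else if t = k' then .inl (Fin.last (w + 1)) else castTop (f (.inr t))

variable {k k' : Fin c} {f : Fin w ⊕ Fin c → Fin w ⊕ Fin c}

@[simp]
theorem cupExtend_castSucc_last : cupExtend k k' f (.inl (Fin.last w).castSucc) = .inr k := by
  simp [cupExtend]

@[simp]
theorem cupExtend_last : cupExtend k k' f (.inl (Fin.last (w + 1))) = .inr k' := by
  simp [cupExtend]

theorem cupExtend_inr_left : cupExtend k k' f (.inr k) = .inl (Fin.last w).castSucc :=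
  if_pos rfl

theorem cupExtend_inr_right (hkk' : k ≠ k') :
    cupExtend k k' f (.inr k') = .inl (Fin.last (w + 1)) := by
  simp [cupExtend, hkk'.symm]

theorem cupExtend_castTop {u : Fin w ⊕ Fin c} (hk : u ≠ .inr k) (hk' : u ≠ .inr k') :
    cupExtend k k' f (castTop u) = castTop (f u) := by
  rcases u with j | t
  · simp [cupExtend, castTop]
  · simp_all [cupExtend, castTop]

theorem involutive_cupExtend (hf : Involutive f) (hk : f (.inr k) = .inr k') (hkk' : k ≠ k') :
    Involutive (cupExtend k k' f) := by
  have hk' : f (.inr k') = .inr k := by rw [← hk, hf]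
  intro x
  rcases castTop_cases x with rfl | rfl | ⟨u, rfl⟩
  · rw [cupExtend_castSucc_last, cupExtend_inr_left]
  · rw [cupExtend_last, cupExtend_inr_right hkk']
  · rcases eq_or_ne u (.inr k) with rfl | h1
    · exact congrArg (cupExtend k k' f) cupExtend_inr_left |>.trans cupExtend_castSucc_last
    rcases eq_or_ne u (.inr k') with rfl | h2
    · exact congrArg (cupExtend k k' f) (cupExtend_inr_right hkk') |>.trans cupExtend_last
    have h1' : f u ≠ .inr k := fun h => h2 (by rw [← hf u, h, hk])
    have h2' : f u ≠ .inr k' := fun h => h1 (by rw [← hf u, h, hk'])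
    rw [cupExtend_castTop h1 h2, cupExtend_castTop h1' h2', hf]

theorem cupExtend_ne_self (hfp : ∀ x, f x ≠ x) (hkk' : k ≠ k') (x : Fin (w + 2) ⊕ Fin c) :
    cupExtend k k' f x ≠ x := by
  rcases castTop_cases x with rfl | rfl | ⟨u, rfl⟩
  · simp
  · simp
  · rcases eq_or_ne u (.inr k) with rfl | h1
    · change cupExtend k k' f (.inr k) ≠ .inr k
      simp [cupExtend_inr_left]
    rcases eq_or_ne u (.inr k') with rfl | h2
    · change cupExtend k k' f (.inr k') ≠ .inr k'
      simp [cupExtend_inr_right hkk']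
    rw [cupExtend_castTop h1 h2]
    exact castTop_injective.ne (hfp u)

theorem exists_cupExtend_inl_eq_inr (htop : ∀ i, ∃ t, f (.inl i) = .inr t) (i : Fin (w + 2)) :
    ∃ t, cupExtend k k' f (.inl i) = .inr t := by
  rcases castTop_cases (.inl i : Fin (w + 2) ⊕ Fin c) with h | h | ⟨u, h⟩
  · exact ⟨k, h ▸ cupExtend_castSucc_last⟩
  · exact ⟨k', h ▸ cupExtend_last⟩
  · rcases u with j | t
    · obtain ⟨t, ht⟩ := htop j
      refine ⟨t, ?_⟩
      rw [h, cupExtend_castTop (by simp) (by simp), ht]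
      rfl
    · simp [castTop] at h

/-- A left inverse of `castTop` sending the two new top points to `k`. -/
def cupTrace (k : Fin c) : Fin (w + 2) ⊕ Fin c → Fin w ⊕ Fin c :=
  Sum.elim (Fin.lastCases (.inr k) (Fin.lastCases (.inr k) .inl)) .inr

@[simp]
theorem cupTrace_castTop (u : Fin w ⊕ Fin c) : cupTrace k (castTop u) = u := by
  rcases u with j | t <;> simp [cupTrace, castTop]

@[simp]
theorem cupTrace_inr (t : Fin c) : cupTrace (w := w) k (.inr t) = .inr t := rfl

@[simp]
theorem cupTrace_castSucc_last : cupTrace (w := w) k (.inl (Fin.last w).castSucc) = .inr k := by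
  simp [cupTrace]

@[simp]
theorem cupTrace_last : cupTrace (w := w) k (.inl (Fin.last (w + 1))) = .inr k := by
  simp [cupTrace]

theorem Realizes.cons_cup {pl : Plan (w + 2) c} (h : Realizes pl (pairRel (cupExtend k k' f)))
    (hf : Involutive f) (hk : f (.inr k) = .inr k') (hkk' : k ≠ k') :
    Realizes (.cons (Row.cup w 0) pl) (pairRel f) := by
  set g := cupExtend k k' f with hg_def
  have hg := involutive_cupExtend hf hk hkk'
  have hk' : f (.inr k') = .inr k := by rw [← hk, hf]
  have hrow : ∀ {u v}, rowRel (Row.cup w 0) u v →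
      EqvGen (StackEdge (EqvGen (rowRel (Row.cup w 0))) (pairRel g)) (ιtop u) (ιtop v) :=
    fun huv => eqvGen_stackEdge_top (EqvGen.rel _ _ huv)
  have hbot : ∀ u, EqvGen (StackEdge (EqvGen (rowRel (Row.cup w 0))) (pairRel g))
      (ιbot u) (ιbot (g u)) := fun u => eqvGen_stackEdge_bot (pairRel_apply hg u)
  have hmid : ∀ x, EqvGen (StackEdge (EqvGen (rowRel (Row.cup w 0))) (pairRel g))
      (ιout x) (ιbot (castTop x)) := by
    rintro (i | t)
    · exact hrow (rowRel_cup.2 (.inr ⟨i, rfl, rfl⟩))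
    · exact EqvGen.refl _
  have hcup : EqvGen (StackEdge (EqvGen (rowRel (Row.cup w 0))) (pairRel g))
      (ιout (.inr k)) (ιout (.inr k')) := by
    have h1 := hbot (.inr k)
    have h2 := hbot (.inl (Fin.last (w + 1)))
    rw [hg_def, cupExtend_inr_left] at h1
    rw [hg_def, cupExtend_last] at h2
    exact (h1.trans _ _ _ (hrow (rowRel_cup.2 (.inl ⟨rfl, rfl⟩)))).trans _ _ _ h2
  refine h.cons (stackRel_iff_pairRel hg hf (Sum.elim .inl (cupTrace k))
    (by rintro (_ | _) <;> rfl) (fun u v huv => ?_) (fun u => ?_) (fun x => ?_))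
  · rcases rowRel_cup.1 huv with ⟨rfl, rfl⟩ | ⟨j, rfl, rfl⟩
    all_goals
      simp only [ιtop, Sum.elim_inl, Sum.elim_inr, cupTrace, Fin.lastCases_last,
        Fin.lastCases_castSucc]
      exact (pairRel_equivalence f).refl _
  · change pairRel f (cupTrace k u) (cupTrace k (g u))
    rcases castTop_cases u with rfl | rfl | ⟨p, rfl⟩
    · simpa [hg_def] using (pairRel_equivalence f).refl _
    · simpa [hg_def, ← hk] using pairRel_apply hf _
    rcases eq_or_ne p (.inr k) with rfl | h1
    · simpa [hg_def, cupExtend_inr_left] using (pairRel_equivalence f).refl _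
    rcases eq_or_ne p (.inr k') with rfl | h2
    · simpa [hg_def, cupExtend_inr_right hkk', ← hk'] using pairRel_apply hf _
    · simpa [hg_def, cupExtend_castTop h1 h2] using pairRel_apply hf _
  · rcases eq_or_ne x (.inr k) with rfl | h1
    · exact hk ▸ hcup
    rcases eq_or_ne x (.inr k') with rfl | h2
    · exact hk' ▸ hcup.symm
    have := hbot (castTop x)
    rw [hg_def, cupExtend_castTop h1 h2] at this
    exact ((hmid x).trans _ _ _ this).trans _ _ _ (hmid (f x)).symm

end CapCup

section Construction

variable {n : ℕ}

theorem injective_of_forall_inl_eq_inr {m : ℕ} {f : Fin m ⊕ Fin n → Fin m ⊕ Fin n}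
    (hf : Involutive f) {π : Fin m → Fin n} (hπ : ∀ i, f (.inl i) = .inr (π i)) : Injective π :=
  fun i j h => Sum.inl_injective (hf.injective (by rw [hπ, hπ, h]))

theorem exists_plan_sq_of_forall_inl_eq_inr (hn : 1 ≤ n) {f : Fin n ⊕ Fin n → Fin n ⊕ Fin n}
    (hf : Involutive f) {π : Fin n → Fin n} (hπ : ∀ i, f (.inl i) = .inr (π i)) :
    ∃ pl : Plan n n, Realizes pl (pairRel f) ∧ planHt pl ≤ n - 2 := by
  set σ := Equiv.ofBijective π (injective_of_forall_inl_eq_inr hf hπ).bijective_of_finite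
  have hsemi : Semiconj (Sum.map σ id) f Sum.swap := by
    rintro (i | t)
    · simp [hπ, σ]
    · obtain ⟨i, rfl⟩ := σ.surjective t
      simp [σ, hf.eq_iff.2 (hπ i).symm]
  obtain ⟨pl, hpl, hH⟩ := exists_realizes_onFun_sumMap (realizes_nil_swap n) (H := n - 2)
    (by change (-1 : ℤ) ≤ _; omega) (by omega) σ
  refine ⟨pl, hpl.congr fun x y => ?_, hH⟩
  exact hsemi.pairRel_iff (Sum.map_injective.2 ⟨σ.injective, injective_id⟩)

theorem exists_plan_of_forall_inl_eq_inr (hn : 1 ≤ n) {m : ℕ} (hm : m ≤ n)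
    (f : Fin m ⊕ Fin n → Fin m ⊕ Fin n) (hf : Involutive f) (hfp : ∀ x, f x ≠ x)
    (htop : ∀ i, ∃ k, f (.inl i) = .inr k) :
    ∃ pl : Plan m n, Realizes pl (pairRel f) ∧ planHt pl ≤ n - 2 := by
  choose π hπ using htop
  obtain rfl | hlt := hm.eq_or_lt
  · exact exists_plan_sq_of_forall_inl_eq_inr hn hf hπ
  have hinj := injective_of_forall_inl_eq_inr hf hπ
  obtain ⟨k, hk⟩ : ∃ k, ∀ i, π i ≠ k := by
    by_contra! h
    have := Fintype.card_le_of_surjective π h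
    simp only [Fintype.card_fin] at this
    omega
  obtain ⟨k', hfk⟩ : ∃ k', f (.inr k) = .inr k' := by
    rcases h : f (.inr k) with i | k'
    · exact absurd (Sum.inr_injective ((hf.eq_iff.1 h).trans (hπ i))).symm (hk i)
    · exact ⟨k', rfl⟩
  have hkk' : k ≠ k' := by
    rintro rfl
    exact hfp _ hfk
  have hk' : ∀ i, π i ≠ k' := by
    rintro i rfl
    exact Sum.inl_ne_inr ((hf.eq_iff.1 (hπ i)).trans (hf.eq_iff.1 hfk).symm)
  obtain ⟨pl, hpl, hH⟩ := exists_plan_of_forall_inl_eq_inr hn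
    (add_two_le_of_injective hinj hkk' hk hk') (cupExtend k k' f)
    (involutive_cupExtend hf hfk hkk') (cupExtend_ne_self hfp hkk')
    (exists_cupExtend_inl_eq_inr fun i => ⟨π i, hπ i⟩)
  exact ⟨.cons (Row.cup m 0) pl, hpl.cons_cup hf hfk hkk',
    planHt_cons_le (by change (-1 : ℤ) ≤ _; omega) hH⟩
termination_by n - m

/-- The two points are moved to the right end of the top boundary by crossings and capped off. -/
theorem exists_plan_of_inl_eq_inl {w c : ℕ} {H : ℤ} (hH : (w : ℤ) ≤ H)
    {f : Fin (w + 2) ⊕ Fin c → Fin (w + 2) ⊕ Fin c} (hf : Involutive f) (hfp : ∀ x, f x ≠ x)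
    {i j : Fin (w + 2)} (hij : f (.inl i) = .inl j)
    (hrec : ∀ g : Fin w ⊕ Fin c → Fin w ⊕ Fin c, Involutive g → (∀ x, g x ≠ x) →
      ∃ pl : Plan w c, Realizes pl (pairRel g) ∧ planHt pl ≤ H) :
    ∃ pl : Plan (w + 2) c, Realizes pl (pairRel f) ∧ planHt pl ≤ H := by
  have hne : i ≠ j := by
    rintro rfl
    exact hfp _ hij
  obtain ⟨π, hπi, hπj⟩ := Equiv.Perm.exists_apply_eq_and_apply_eq hne
    (Fin.castSucc_lt_last (Fin.last w)).ne
  set τ := Equiv.sumCongr π (Equiv.refl (Fin c))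
  set f' := τ ∘ f ∘ τ.symm
  have hτ : Semiconj τ f f' := fun x => by simp [f']
  have hτ' : Semiconj τ.symm f' f := fun x => by simp [f']
  have hf' := hτ'.involutive_of_injective τ.symm.injective hf
  have hcap : f' (.inl (Fin.last w).castSucc) = .inl (Fin.last (w + 1)) := by
    simp [f', τ, ← hπi, hij, hπj]
  obtain ⟨g, hg⟩ := exists_semiconj_castTop hf' hcap
  obtain ⟨pl, hpl, hH'⟩ := hrec g (hg.involutive_of_injective castTop_injective hf')
    (hg.apply_ne_self (hτ'.apply_ne_self hfp))
  obtain ⟨pl', hpl', hH''⟩ := exists_realizes_onFun_sumMap (hpl.cons_cap hf' hcap hg)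
    (planHt_cons_le (by change (-1 : ℤ) ≤ _; omega) hH') (by push_cast; omega) π
  exact ⟨pl', hpl'.congr fun x y => hτ.pairRel_iff τ.injective, hH''⟩

theorem exists_plan (hn : 1 ≤ n) {m : ℕ} (hm : m ≤ n)
    (f : Fin m ⊕ Fin n → Fin m ⊕ Fin n) (hf : Involutive f) (hfp : ∀ x, f x ≠ x) :
    ∃ pl : Plan m n, Realizes pl (pairRel f) ∧ planHt pl ≤ n - 2 := by
  by_cases htop : ∀ i, ∃ k, f (.inl i) = .inr k
  · exact exists_plan_of_forall_inl_eq_inr hn hm f hf hfp htop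
  push Not at htop
  obtain ⟨i, hi⟩ := htop
  obtain ⟨j, hij⟩ : ∃ j, f (.inl i) = .inl j := by
    rcases h : f (.inl i) with j | k
    exacts [⟨j, rfl⟩, absurd h (hi k)]
  obtain ⟨w, rfl⟩ : ∃ w, m = w + 2 := ⟨m - 2, by
    have := Fin.val_ne_of_ne fun h : i = j => hfp _ (h ▸ hij)
    omega⟩
  exact exists_plan_of_inl_eq_inl (by omega) hf hfp hij fun g hg hgp =>
    exists_plan hn (by omega) g hg hgp
termination_by m

end Construction

/-- every pair partition `p ∈ J(n,n)` (here: the partition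
induced by a fixed-point-free involution `f` of `{1,…,n} ∪ {1',…,n'}`)
has left-height at most `n - 2`; consequently for every `r ≥ n - 2`, having
left-height at most `r` is the same as having left-height at most `n - 2`,
i.e. `J_{≤r}(n,n) = J_{≤n-2}(n,n)`. -/
theorem height_le_of_pair_partition {n : ℕ} (hn : 1 ≤ n)
    (f : (Fin n ⊕ Fin n) → (Fin n ⊕ Fin n))
    (hinv : Function.Involutive f) (hfp : ∀ x, f x ≠ x) :
    ht (Relation.EqvGen fun x y => y = f x) ≤ (n : ℤ) - 2 ∧
    ∀ r : ℤ, (n : ℤ) - 2 ≤ r →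
      (ht (Relation.EqvGen fun x y => y = f x) ≤ r ↔
        ht (Relation.EqvGen fun x y => y = f x) ≤ (n : ℤ) - 2) := by
  obtain ⟨pl, hpl, hH⟩ := exists_plan hn le_rfl f hinv hfp
  have hle : ht (EqvGen fun x y => y = f x) ≤ (n : ℤ) - 2 :=
    (ht_le_of_realizes (hpl.congr fun _ _ => (eqvGen_eq_apply_iff_pairRel hinv).symm)).trans hH
  exact ⟨hle, fun r hr => ⟨fun _ => hle, fun h => h.trans hr⟩⟩
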